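/- arXiv:0809.1922 — 4 statements merged into one kernel-verified Lean document; each statement's English description precedes it below -/
import Mathlib

section
/- Let (S,*,n) be a symmetric composition algebra over a field k and let S = ⊕_{g∈G} S_g be a grading of S by a group G. Then: (a) for any g, h ∈ G, the polar form satisfies n(S_g, S_h) = 0 unless h = g⁻¹; and (b) any two elements g, h ∈ G with S_g ≠ 0 and S_h ≠ 0 commute in G. In particular, if G is generated by the support of the grading, then G is abelian. -/
/-!
Nondegeneracy and associativity of the norm turn the composition law into the flexible identity
`(x * u) * x = n(x) u`, whose linearization reads `(x * u) * y + (y * u) * x = n(x, y) u`.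
For homogeneous `x ∈ S_g`, `y ∈ S_g'`, `u ∈ S_h` the two summands on the left have degrees
`g h g'` and `g' h g`; if neither equals `h`, independence of the components forces
`n(x, y) u = 0`. Taking `u = x` gives the orthogonality (a). For (b), pick `x ≠ 0` in `S_g` and,
by (a) and nondegeneracy, `y ∈ S_{g⁻¹}` with `n(x, y) ≠ 0`; then for `0 ≠ u ∈ S_h` one of
`g h g⁻¹`, `g⁻¹ h g` must equal `h`, i.e. `g` and `h` commute.
-/

open QuadraticMap

section Composition

variable {R M : Type*} [CommRing R] [AddCommGroup M] [Module R M]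
  (mul : M →ₗ[R] M →ₗ[R] M) (Q : QuadraticForm R M)

theorem polar_mul_mul_left (hcomp : ∀ x y : M, Q (mul x y) = Q x * Q y) (x y z : M) :
    polar Q (mul x y) (mul x z) = Q x * polar Q y z := by
  simp only [polar, ← map_add (mul x), hcomp]
  ring

theorem mul_mul_self_eq_smul (hnondeg : ∀ x : M, (∀ y : M, polar Q x y = 0) → x = 0)
    (hcomp : ∀ x y : M, Q (mul x y) = Q x * Q y)
    (hassoc : ∀ x y z : M, polar Q (mul x y) z = polar Q x (mul y z)) (x y : M) :
    mul (mul x y) x = Q x • y := by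
  refine sub_eq_zero.mp (hnondeg _ fun z => ?_)
  rw [polar_sub_left, hassoc, polar_mul_mul_left mul Q hcomp, polar_smul_left, smul_eq_mul,
    sub_self]

theorem mul_mul_add_mul_mul_eq_polar_smul (hflex : ∀ x y : M, mul (mul x y) x = Q x • y)
    (x y u : M) : mul (mul x u) y + mul (mul y u) x = polar Q x y • u := by
  have h := hflex (x + y) u
  simp only [map_add, LinearMap.add_apply, hflex x u, hflex y u] at h
  rw [polar, sub_smul, sub_smul, ← h]
  module

end Composition

theorem iSupIndep.eq_zero_of_eq_add {R M ι : Type*} [Semiring R] [AddCommMonoid M] [Module R M]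
    {A : ι → Submodule R M} (hA : iSupIndep A) {i j₁ j₂ : ι} (hj₁ : j₁ ≠ i) (hj₂ : j₂ ≠ i)
    {v v₁ v₂ : M} (hv : v ∈ A i) (hv₁ : v₁ ∈ A j₁) (hv₂ : v₂ ∈ A j₂) (hsum : v = v₁ + v₂) :
    v = 0 := by
  have hmem : v ∈ ⨆ j ∈ ({j₁, j₂} : Set ι), A j := by
    rw [hsum]
    exact add_mem (le_biSup A (by simp : j₁ ∈ ({j₁, j₂} : Set ι)) hv₁)
      (le_biSup A (by simp : j₂ ∈ ({j₁, j₂} : Set ι)) hv₂)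
  have hdisj := hA.disjoint_biSup (y := {j₁, j₂}) (x := i) (by simp [hj₁.symm, hj₂.symm])
  exact (Submodule.disjoint_def.mp hdisj) v hv hmem

section Grading

variable {k S G : Type*} [Field k] [AddCommGroup S] [Module k S] [Group G]
  {mul : S →ₗ[k] S →ₗ[k] S} {Q : QuadraticForm k S} {A : G → Submodule k S}

theorem polar_smul_eq_zero_of_mem (hind : iSupIndep A)
    (hgrmul : ∀ g h : G, ∀ x ∈ A g, ∀ y ∈ A h, mul x y ∈ A (g * h))
    (hlin : ∀ x y u : S, mul (mul x u) y + mul (mul y u) x = polar Q x y • u)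
    {g g' h : G} (h₁ : g * h * g' ≠ h) (h₂ : g' * h * g ≠ h) {x y u : S}
    (hx : x ∈ A g) (hy : y ∈ A g') (hu : u ∈ A h) : polar Q x y • u = 0 :=
  hind.eq_zero_of_eq_add h₁ h₂ (Submodule.smul_mem _ _ hu)
    (hgrmul _ _ _ (hgrmul _ _ _ hx _ hu) _ hy) (hgrmul _ _ _ (hgrmul _ _ _ hy _ hu) _ hx)
    (hlin x y u).symm

theorem polar_eq_zero_of_mem_of_ne_inv (hind : iSupIndep A)
    (hgrmul : ∀ g h : G, ∀ x ∈ A g, ∀ y ∈ A h, mul x y ∈ A (g * h))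
    (hlin : ∀ x y u : S, mul (mul x u) y + mul (mul y u) x = polar Q x y • u)
    {g h : G} (hne : h ≠ g⁻¹) {x y : S} (hx : x ∈ A g) (hy : y ∈ A h) : polar Q x y = 0 := by
  have h₁ : g * g * h ≠ g := fun hc =>
    hne (eq_inv_of_mul_eq_one_right (by rwa [mul_assoc, mul_eq_left] at hc))
  have h₂ : h * g * g ≠ g := fun hc =>
    hne (eq_inv_of_mul_eq_one_left (by rwa [mul_eq_right] at hc))
  rcases smul_eq_zero.mp (polar_smul_eq_zero_of_mem hind hgrmul hlin h₁ h₂ hx hy hx) with h | h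
  · exact h
  · rw [h, polar_zero_left]

theorem exists_mem_inv_polar_ne_zero (htop : ⨆ g, A g = ⊤)
    (hnondeg : ∀ x : S, (∀ y : S, polar Q x y = 0) → x = 0)
    (hortho : ∀ g h : G, h ≠ g⁻¹ → ∀ x ∈ A g, ∀ y ∈ A h, polar Q x y = 0)
    {g : G} {x : S} (hx : x ∈ A g) (hx0 : x ≠ 0) : ∃ y ∈ A g⁻¹, polar Q x y ≠ 0 := by
  by_contra! hcon
  refine hx0 (hnondeg x fun z => ?_)
  have hker : ⨆ m, A m ≤ LinearMap.ker (Q.polarBilin x) := iSup_le fun m y hy => by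
    by_cases hm : m = g⁻¹
    · subst hm; exact hcon y hy
    · exact hortho g m hm x hx y hy
  exact hker (htop ▸ Submodule.mem_top)

theorem mul_comm_of_component_ne_bot (hind : iSupIndep A)
    (hgrmul : ∀ g h : G, ∀ x ∈ A g, ∀ y ∈ A h, mul x y ∈ A (g * h))
    (hlin : ∀ x y u : S, mul (mul x u) y + mul (mul y u) x = polar Q x y • u)
    (hpair : ∀ g : G, ∀ x ∈ A g, x ≠ 0 → ∃ y ∈ A g⁻¹, polar Q x y ≠ 0)
    {g h : G} (hg : A g ≠ ⊥) (hh : A h ≠ ⊥) : g * h = h * g := by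
  obtain ⟨x, hx, hx0⟩ := Submodule.exists_mem_ne_zero_of_ne_bot hg
  obtain ⟨u, hu, hu0⟩ := Submodule.exists_mem_ne_zero_of_ne_bot hh
  obtain ⟨y, hy, hxy⟩ := hpair g x hx hx0
  by_contra hcomm
  have h₁ : g * h * g⁻¹ ≠ h := fun hc => hcomm (by rw [mul_inv_eq_iff_eq_mul] at hc; exact hc)
  have h₂ : g⁻¹ * h * g ≠ h := fun hc => hcomm (by
    rw [mul_assoc, inv_mul_eq_iff_eq_mul] at hc; exact hc.symm)
  rcases smul_eq_zero.mp (polar_smul_eq_zero_of_mem hind hgrmul hlin h₁ h₂ hx hy hu) with h | h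
  · exact hxy h
  · exact hu0 h

end Grading

theorem Subgroup.mul_comm_of_closure_eq_top {G : Type*} [Group G] {s : Set G}
    (hcomm : ∀ x ∈ s, ∀ y ∈ s, x * y = y * x) (hs : closure s = ⊤) (a b : G) : a * b = b * a := by
  have := isMulCommutative_closure hcomm
  have hmem : ∀ c, c ∈ closure s := fun c => hs ▸ mem_top c
  exact congrArg Subtype.val (mul_comm' (⟨a, hmem a⟩ : closure s) ⟨b, hmem b⟩)

/-- In a group-graded symmetric composition algebra, homogeneous
components of degrees `g`, `h` are orthogonal unless `h = g⁻¹`; any two elements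
of the support commute; in particular if the support generates `G` then `G` is
abelian. -/
theorem graded_symmetric_composition_support_commutes
    {k : Type*} [Field k] {S : Type*} [AddCommGroup S] [Module k S]
    (mul : S →ₗ[k] S →ₗ[k] S) (n : QuadraticForm k S)
    (hnondeg : ∀ x : S, (∀ y : S, polar n x y = 0) → x = 0)
    (hcomp : ∀ x y : S, n (mul x y) = n x * n y)
    (hassoc : ∀ x y z : S, polar n (mul x y) z = polar n x (mul y z))
    {G : Type*} [Group G] [DecidableEq G]
    (A : G → Submodule k S)
    (hdecomp : DirectSum.IsInternal A)
    (hgrmul : ∀ g h : G, ∀ x ∈ A g, ∀ y ∈ A h, mul x y ∈ A (g * h)) :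
    (∀ g h : G, h ≠ g⁻¹ → ∀ x ∈ A g, ∀ y ∈ A h, polar n x y = 0) ∧
    (∀ g h : G, A g ≠ ⊥ → A h ≠ ⊥ → g * h = h * g) ∧
    (Subgroup.closure {g : G | A g ≠ ⊥} = ⊤ → ∀ a b : G, a * b = b * a) := by
  have hind := hdecomp.submodule_iSupIndep
  have hlin := mul_mul_add_mul_mul_eq_polar_smul mul n
    (mul_mul_self_eq_smul mul n hnondeg hcomp hassoc)
  have hortho : ∀ g h : G, h ≠ g⁻¹ → ∀ x ∈ A g, ∀ y ∈ A h, polar n x y = 0 :=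
    fun g h hne x hx y hy => polar_eq_zero_of_mem_of_ne_inv hind hgrmul hlin hne hx hy
  have hpair : ∀ g : G, ∀ x ∈ A g, x ≠ 0 → ∃ y ∈ A g⁻¹, polar n x y ≠ 0 := fun g x hx hx0 =>
    exists_mem_inv_polar_ne_zero hdecomp.submodule_iSup_eq_top hnondeg hortho hx hx0
  have hcomm : ∀ g h : G, A g ≠ ⊥ → A h ≠ ⊥ → g * h = h * g :=
    fun g h hg hh => mul_comm_of_component_ne_bot hind hgrmul hlin hpair hg hh
  exact ⟨hortho, hcomm, Subgroup.mul_comm_of_closure_eq_top fun g hg h hh => hcomm g h hg hh⟩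
end

section
/- Let (S,*,n) be a symmetric composition algebra over a field k with dim_k S ≥ 4 that possesses a para-unit e, and let S = ⊕_{g∈G} S_g be a grading of S by a group G. Then e belongs to the identity component S_1. -/
/-!
Write `e_g` for the degree-`g` component of `e` and `f = n(e, ·)`. Projecting the para-unit
identities onto homogeneous components gives `e_g * x = f(x) e_{gh} - δ_{g,1} x` and
`x * e_g = f(x) e_{hg} - δ_{g,1} x` for `x ∈ S_h`. Substituted into the linearized flexible law
`x * (m * y) + y * (m * x) = n(x, y) m` with `m = e_w`, `w ≠ 1`, they express `n(x, y) e_w`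
through components of `e` alone.

Suppose `e_g ≠ 0` for some `g ≠ 1`. Then `f` does not vanish on `S_{g⁻¹}`, and for `u ∈ S_{g⁻¹}`
with `f(u) = 1` the formula becomes `n(u, y) e_g + y = 2 f(y) e_b - [gb = 1] f(y) u` for
`y ∈ S_b`. This forces `f(e_g) ≠ 0` and then makes `f` injective on every homogeneous component,
so all components have dimension at most one. As `dim S ≥ 4`, some `S_b` with
`b ∉ {1, g, g⁻¹}` is nonzero; the same argument for `b` gives `2 n(e_b, e_b) = -1` and
`2 f(e_b) = 1`, and then the formula for `n(e_b, e_b) e_g` reads `e_g = -e_{bgb}`, so `e_g = 0`.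
-/

open QuadraticMap DirectSum

section

variable {k S : Type*} [Field k] [AddCommGroup S] [Module k S]

structure IsSymmetricComposition (mul : S →ₗ[k] S →ₗ[k] S) (n : QuadraticForm k S) :
    Prop where
  nondeg : ∀ x : S, (∀ y : S, polar n x y = 0) → x = 0
  map_mul : ∀ x y : S, n (mul x y) = n x * n y
  polar_mul_left : ∀ x y z : S, polar n (mul x y) z = polar n x (mul y z)

def IsParaUnit (mul : S →ₗ[k] S →ₗ[k] S) (n : QuadraticForm k S) (e : S) : Prop :=
  ∀ x : S, mul e x = polar n e x • e - x ∧ mul x e = polar n e x • e - x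

namespace IsSymmetricComposition

variable {mul : S →ₗ[k] S →ₗ[k] S} {n : QuadraticForm k S}

theorem polar_mul_mul_right (hS : IsSymmetricComposition mul n) (x y z : S) :
    polar n (mul x z) (mul y z) = polar n x y * n z := by
  have hadd : mul x z + mul y z = mul (x + y) z := by simp
  simp only [polar, hadd, hS.map_mul]
  ring

theorem mul_mul_self (hS : IsSymmetricComposition mul n) (x y : S) :
    mul x (mul y x) = n x • y := by
  refine sub_eq_zero.mp (hS.nondeg _ fun z => ?_)
  rw [polar_sub_left, polar_smul_left, polar_comm, ← hS.polar_mul_left,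
    hS.polar_mul_mul_right, polar_comm n z y, smul_eq_mul, mul_comm, sub_self]

theorem mul_mul_add_mul_mul (hS : IsSymmetricComposition mul n) (m x z : S) :
    mul x (mul m z) + mul z (mul m x) = polar n x z • m := by
  have h := hS.mul_mul_self (x + z) m
  simp only [map_add, LinearMap.add_apply, hS.mul_mul_self, polar] at h ⊢
  rw [sub_smul, sub_smul, ← h]
  abel

theorem polar_eq_of_isParaUnit (hS : IsSymmetricComposition mul n) {e : S}
    (he : IsParaUnit mul n e) (x y : S) :
    polar n x y = polar n e x * polar n e y - polar n e (mul x y) := by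
  rw [polar_comm n e (mul x y), hS.polar_mul_left, (he y).2, polar_sub_right,
    polar_smul_right, polar_comm n x e, smul_eq_mul]
  ring

end IsSymmetricComposition

section Projection

variable {G : Type*} [DecidableEq G] (A : G → Submodule k S) [Decomposition A]

def gradedProj (c : G) : S →ₗ[k] S :=
  (A c).subtype ∘ₗ component k G (fun i => A i) c ∘ₗ (decomposeLinearEquiv A).toLinearMap

variable {A}

theorem gradedProj_mem (c : G) (x : S) : gradedProj A c x ∈ A c := (decompose A x c).2

theorem gradedProj_of_mem {b : G} {x : S} (hx : x ∈ A b) (c : G) :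
    gradedProj A c x = if b = c then x else 0 := by
  split_ifs with h
  · subst h; exact decompose_of_mem_same A hx
  · exact decompose_of_mem_ne A hx h

theorem eq_zero_of_forall_gradedProj_eq_zero {x : S} (hx : ∀ c, gradedProj A c x = 0) :
    x = 0 := by
  have h : decompose A x = 0 := by
    ext c
    exact hx c
  simpa using congrArg (decompose A).symm h

theorem mem_of_gradedProj_eq_zero {b : G} {x : S} (hx : ∀ c, c ≠ b → gradedProj A c x = 0) :
    x ∈ A b := by
  have h : x - gradedProj A b x = 0 := eq_zero_of_forall_gradedProj_eq_zero fun c => by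
    rw [map_sub, gradedProj_of_mem (gradedProj_mem b x)]
    split_ifs with hbc
    · rw [hbc, sub_self]
    · rw [hx c (Ne.symm hbc), sub_zero]
  rw [sub_eq_zero.mp h]
  exact gradedProj_mem b x

theorem eq_of_mem_of_mem_of_ne_zero {a b : G} {x : S} (ha : x ∈ A a) (hb : x ∈ A b)
    (hx : x ≠ 0) : a = b := by
  by_contra hab
  exact hx (by simpa [hab] using (gradedProj_of_mem hb b).symm.trans (gradedProj_of_mem ha b))

theorem polar_eq_zero_of_forall_mem (Q : QuadraticForm k S) {x : S}
    (hx : ∀ b, ∀ y ∈ A b, polar Q x y = 0) (y : S) : polar Q x y = 0 := by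
  induction y using Decomposition.inductionOn A with
  | zero => exact polar_zero_right Q x
  | homogeneous y => exact hx _ y y.2
  | add y z hy hz => rw [polar_add_right, hy, hz, add_zero]

theorem exists_mem_ne_zero_of_card_lt_finrank (f : S →ₗ[k] k)
    (hf : ∀ c, ∀ z ∈ A c, f z = 0 → z = 0) (s : Finset G)
    (hs : s.card < Module.finrank k S) :
    ∃ c ∉ s, ∃ y ∈ A c, y ≠ 0 := by
  by_contra! h
  let Φ : S →ₗ[k] (s → k) := LinearMap.pi fun c => f ∘ₗ gradedProj A c
  have hΦ : Function.Injective Φ := by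
    refine (injective_iff_map_eq_zero Φ).mpr fun x hx => ?_
    refine eq_zero_of_forall_gradedProj_eq_zero (A := A) fun c => ?_
    by_cases hc : c ∈ s
    · exact hf c _ (gradedProj_mem c x) (congrFun hx ⟨c, hc⟩)
    · exact h c hc _ (gradedProj_mem c x)
  have := LinearMap.finrank_le_finrank_of_injective hΦ
  rw [Module.finrank_fintype_fun_eq_card, Fintype.card_coe] at this
  omega

end Projection

def IsGradedMul {G : Type*} [Mul G] (mul : S →ₗ[k] S →ₗ[k] S) (A : G → Submodule k S) : Prop :=
  ∀ g h : G, ∀ x ∈ A g, ∀ y ∈ A h, mul x y ∈ A (g * h)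

variable {G : Type*} [Group G]

section GradedMul

variable [DecidableEq G] {A : G → Submodule k S} [Decomposition A]
  {mul : S →ₗ[k] S →ₗ[k] S}

theorem gradedProj_mul_of_mem_right (hgr : IsGradedMul mul A) {h : G} {x : S} (hx : x ∈ A h)
    (c : G) (z : S) : gradedProj A c (mul z x) = mul (gradedProj A (c * h⁻¹) z) x := by
  induction z using Decomposition.inductionOn A with
  | zero => simp
  | homogeneous z =>
    rw [gradedProj_of_mem (hgr _ h z z.2 x hx), gradedProj_of_mem z.2]
    simp only [eq_mul_inv_iff_mul_eq]
    split_ifs <;> simp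
  | add y z hy hz => simp only [map_add, LinearMap.add_apply, hy, hz]

theorem gradedProj_mul_of_mem_left (hgr : IsGradedMul mul A) {h : G} {x : S} (hx : x ∈ A h)
    (c : G) (z : S) : gradedProj A c (mul x z) = mul x (gradedProj A (h⁻¹ * c) z) := by
  induction z using Decomposition.inductionOn A with
  | zero => simp
  | homogeneous z =>
    rw [gradedProj_of_mem (hgr h _ x hx z z.2), gradedProj_of_mem z.2]
    simp only [eq_inv_mul_iff_mul_eq]
    split_ifs <;> simp
  | add y z hy hz => simp only [map_add, hy, hz]

variable {n : QuadraticForm k S} {e : S}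

theorem mul_gradedProj_paraUnit_left (hgr : IsGradedMul mul A) (he : IsParaUnit mul n e)
    (a : G) {h : G} {x : S} (hx : x ∈ A h) :
    mul (gradedProj A a e) x = polar n e x • gradedProj A (a * h) e - if a = 1 then x else 0 := by
  rw [← mul_inv_cancel_right a h, ← gradedProj_mul_of_mem_right hgr hx, mul_inv_cancel_right,
    (he x).1, map_sub, map_smul, gradedProj_of_mem hx]
  simp only [right_eq_mul]

theorem mul_gradedProj_paraUnit_right (hgr : IsGradedMul mul A) (he : IsParaUnit mul n e)
    (a : G) {h : G} {x : S} (hx : x ∈ A h) :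
    mul x (gradedProj A a e) = polar n e x • gradedProj A (h * a) e - if a = 1 then x else 0 := by
  rw [← inv_mul_cancel_left h a, ← gradedProj_mul_of_mem_left hgr hx, inv_mul_cancel_left,
    (he x).2, map_sub, map_smul, gradedProj_of_mem hx]
  simp only [left_eq_mul]

end GradedMul

section ParaUnit

variable [DecidableEq G] {A : G → Submodule k S} [Decomposition A]
  {mul : S →ₗ[k] S →ₗ[k] S} {n : QuadraticForm k S} {e : S}

theorem polar_smul_gradedProj_paraUnit (hS : IsSymmetricComposition mul n)
    (he : IsParaUnit mul n e) (hgr : IsGradedMul mul A) {w : G} (hw : w ≠ 1) {a b : G} {x y : S}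
    (hx : x ∈ A a) (hy : y ∈ A b) :
    polar n x y • gradedProj A w e =
      (polar n e x * polar n e y) • (gradedProj A (a * w * b) e + gradedProj A (b * w * a) e)
        - (if w * b = 1 then polar n e y • x else 0)
        - (if w * a = 1 then polar n e x • y else 0) := by
  rw [← hS.mul_mul_add_mul_mul, mul_gradedProj_paraUnit_left hgr he w hy,
    mul_gradedProj_paraUnit_left hgr he w hx, if_neg hw, if_neg hw, sub_zero, sub_zero,
    map_smul, map_smul, mul_gradedProj_paraUnit_right hgr he _ hx,
    mul_gradedProj_paraUnit_right hgr he _ hy, mul_assoc, mul_assoc]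
  split_ifs <;> module

theorem polar_smul_gradedProj_paraUnit_add (hS : IsSymmetricComposition mul n)
    (he : IsParaUnit mul n e) (hgr : IsGradedMul mul A) {w : G} (hw : w ≠ 1) {u : S}
    (hu : u ∈ A w⁻¹) (hfu : polar n e u = 1) {b : G} {y : S} (hy : y ∈ A b) :
    polar n u y • gradedProj A w e + y =
      (2 * polar n e y) • gradedProj A b e - if w * b = 1 then polar n e y • u else 0 := by
  have h := polar_smul_gradedProj_paraUnit hS he hgr hw hu hy
  rw [inv_mul_cancel, one_mul, mul_inv_cancel_right, if_pos (mul_inv_cancel w), hfu] at h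
  rw [h]
  split_ifs <;> module

theorem exists_mem_inv_polar_paraUnit_eq_one (hS : IsSymmetricComposition mul n)
    (he : IsParaUnit mul n e) (hgr : IsGradedMul mul A) {w : G} (hw : w ≠ 1)
    (hew : gradedProj A w e ≠ 0) : ∃ u ∈ A w⁻¹, polar n e u = 1 := by
  suffices ∃ u ∈ A w⁻¹, polar n e u ≠ 0 by
    obtain ⟨u, hu, hfu⟩ := this
    refine ⟨(polar n e u)⁻¹ • u, Submodule.smul_mem _ _ hu, ?_⟩
    rw [polar_smul_right, smul_eq_mul, inv_mul_cancel₀ hfu]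
  by_contra! hB
  refine hew (hS.nondeg _ (polar_eq_zero_of_forall_mem (A := A) n fun b y hy => ?_))
  have hww : (if w * w = 1 then polar n e (gradedProj A w e) • y else 0) = 0 := by
    split_ifs with h
    · rw [hB _ (by rw [inv_eq_of_mul_eq_one_right h]; exact gradedProj_mem w e), zero_smul]
    · rfl
  have h := polar_smul_gradedProj_paraUnit hS he hgr hw (gradedProj_mem w e) hy
  rw [hww, sub_zero] at h
  refine (smul_eq_zero.mp ?_).resolve_right hew
  by_cases hwb : w * b = 1
  · rw [h, hB y (by rwa [← inv_eq_of_mul_eq_one_right hwb] at hy)]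
    simp
  · rw [if_neg hwb, sub_zero] at h
    have hwwb : w * w * b ≠ w := by rw [mul_assoc]; exact fun h => hwb (mul_eq_left.mp h)
    have hbww : b * w * w ≠ w := fun h => hwb (mul_eq_one_comm.mp (mul_eq_right.mp h))
    simpa [gradedProj_of_mem (gradedProj_mem _ e), hwwb, hbww] using
      congrArg (gradedProj A w) h

theorem polar_paraUnit_gradedProj_ne_zero (hS : IsSymmetricComposition mul n)
    (he : IsParaUnit mul n e) (hgr : IsGradedMul mul A) {w : G} (hw : w ≠ 1)
    (hew : gradedProj A w e ≠ 0) {u : S} (hu : u ∈ A w⁻¹) (hfu : polar n e u = 1) :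
    polar n e (gradedProj A w e) ≠ 0 := by
  intro hfw
  have hpu : polar n u (gradedProj A w e) = -1 := by
    have h := polar_smul_gradedProj_paraUnit_add hS he hgr hw hu hfu (gradedProj_mem w e)
    rw [hfw] at h
    have h' : (polar n u (gradedProj A w e) + 1) • gradedProj A w e = 0 := by
      split_ifs at h <;> linear_combination (norm := module) h
    linear_combination (smul_eq_zero.mp h').resolve_right hew
  have hf1 : polar n e (gradedProj A 1 e) = 1 := by
    have hmul : mul (gradedProj A w e) u = gradedProj A 1 e := by
      rw [mul_gradedProj_paraUnit_left hgr he w hu, hfu, mul_inv_cancel, if_neg hw, one_smul,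
        sub_zero]
    have h := hS.polar_eq_of_isParaUnit he (gradedProj A w e) u
    rw [hmul, hfw, polar_comm, hpu] at h
    linear_combination h
  have h := polar_smul_gradedProj_paraUnit_add hS he hgr hw hu hfu (gradedProj_mem 1 e)
  rw [hf1, mul_one, mul_one, if_neg hw, sub_zero] at h
  have h1 := congrArg (gradedProj A 1) h
  simp only [map_add, map_smul, gradedProj_of_mem (gradedProj_mem _ e), if_neg hw, ↓reduceIte,
    smul_zero, zero_add] at h1
  have he1 : gradedProj A 1 e = 0 := by linear_combination (norm := module) -h1
  rw [he1, polar_zero_right] at hf1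
  exact zero_ne_one hf1

theorem eq_zero_of_polar_paraUnit_eq_zero (hS : IsSymmetricComposition mul n)
    (he : IsParaUnit mul n e) (hgr : IsGradedMul mul A) {w : G} (hw : w ≠ 1) {u : S}
    (hu : u ∈ A w⁻¹) (hfu : polar n e u = 1) (hfw : polar n e (gradedProj A w e) ≠ 0)
    {c : G} {z : S} (hz : z ∈ A c) (hfz : polar n e z = 0) : z = 0 := by
  have h := polar_smul_gradedProj_paraUnit_add hS he hgr hw hu hfu hz
  have hz' : z = -polar n u z • gradedProj A w e := by
    rw [hfz] at h
    split_ifs at h <;> linear_combination (norm := module) h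
  have hpz : polar n u z = 0 := by
    have := congrArg (polar n e) hz'
    rw [hfz, polar_smul_right, smul_eq_mul, neg_mul] at this
    simpa [hfw] using this
  rw [hz', hpz, neg_zero, zero_smul]

theorem eq_two_mul_polar_paraUnit_smul (hS : IsSymmetricComposition mul n)
    (he : IsParaUnit mul n e) (hgr : IsGradedMul mul A) {w : G} (hw : w ≠ 1) {u : S}
    (hu : u ∈ A w⁻¹) (hfu : polar n e u = 1) {b : G} (hbw : b ≠ w) (hwb : w * b ≠ 1)
    {y : S} (hy : y ∈ A b) : y = (2 * polar n e y) • gradedProj A b e := by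
  have h := congrArg (gradedProj A b) (polar_smul_gradedProj_paraUnit_add hS he hgr hw hu hfu hy)
  simpa [gradedProj_of_mem (gradedProj_mem _ e), gradedProj_of_mem hy, hwb, Ne.symm hbw] using h

theorem two_mul_polar_gradedProj_paraUnit (hS : IsSymmetricComposition mul n)
    (he : IsParaUnit mul n e) (hgr : IsGradedMul mul A) {w : G} (hw : w ≠ 1) {v : S}
    (hv : v ∈ A w⁻¹) (hfv : polar n e v = 1) (hv2 : v = (2 : k) • gradedProj A w⁻¹ e) :
    2 * polar n (gradedProj A w e) (gradedProj A w e) = -1 ∧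
      2 * polar n e (gradedProj A w e) = 1 := by
  have hv0 : v ≠ 0 := by rintro rfl; simp at hfv
  have h := polar_smul_gradedProj_paraUnit_add hS he hgr hw hv hfv hv
  rw [hfv, mul_one, if_pos (mul_inv_cancel w), one_smul, ← hv2, sub_self] at h
  have hvw : v ∈ A w := by
    rw [← neg_eq_of_add_eq_zero_right h]
    exact neg_mem (Submodule.smul_mem _ _ (gradedProj_mem w e))
  rw [eq_of_mem_of_mem_of_ne_zero hv hvw hv0] at hv2
  have hew : gradedProj A w e ≠ 0 := by rintro h0; rw [h0, smul_zero] at hv2; exact hv0 hv2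
  rw [hv2, polar_smul_right] at hfv
  rw [hv2, polar_smul_left, polar_smul_right] at h
  have h2 : (2 : k) ≠ 0 := left_ne_zero_of_mul_eq_one hfv
  have h' : (2 * (2 * polar n (gradedProj A w e) (gradedProj A w e) + 1)) • gradedProj A w e
      = 0 := by
    linear_combination (norm := module) h
  refine ⟨?_, hfv⟩
  linear_combination (mul_eq_zero.mp ((smul_eq_zero.mp h').resolve_right hew)).resolve_left h2

theorem gradedProj_paraUnit_eq_zero_of_two_mul_polar (hS : IsSymmetricComposition mul n)
    (he : IsParaUnit mul n e) (hgr : IsGradedMul mul A) {w b : G} (hw : w ≠ 1) (hwb : w * b ≠ 1)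
    (hpb : 2 * polar n (gradedProj A b e) (gradedProj A b e) = -1)
    (hfb : 2 * polar n e (gradedProj A b e) = 1) : gradedProj A w e = 0 := by
  have h := polar_smul_gradedProj_paraUnit hS he hgr hw (gradedProj_mem b e) (gradedProj_mem b e)
  rw [if_neg hwb, sub_zero, sub_zero] at h
  have h2 : (2 : k) ≠ 0 := left_ne_zero_of_mul_eq_one hfb
  have h3 : (2 : k) • (gradedProj A w e + gradedProj A (b * w * b) e) = 0 := by
    linear_combination (norm := module) (-4 : k) • h + (2 : k) • hpb • gradedProj A w e
      - (2 * (2 * polar n e (gradedProj A b e) + 1)) • hfb • gradedProj A (b * w * b) e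
  have h4 := congrArg (gradedProj A w) ((smul_eq_zero.mp h3).resolve_left h2)
  simp only [map_add, gradedProj_of_mem (gradedProj_mem _ e), ↓reduceIte, map_zero] at h4
  split_ifs at h4 with hbwb
  · rw [hbwb, ← two_smul k] at h4
    exact (smul_eq_zero.mp h4).resolve_left h2
  · rwa [add_zero] at h4

end ParaUnit
end

/-- In a group-graded symmetric composition algebra of dimension at
least 4 possessing a para-unit `e`, the para-unit lies in the identity
component of the grading. -/
theorem paraUnit_mem_identity_component
    {k : Type*} [Field k] {S : Type*} [AddCommGroup S] [Module k S]
    (mul : S →ₗ[k] S →ₗ[k] S) (n : QuadraticForm k S)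
    (hnondeg : ∀ x : S, (∀ y : S, polar n x y = 0) → x = 0)
    (hcomp : ∀ x y : S, n (mul x y) = n x * n y)
    (hassoc : ∀ x y z : S, polar n (mul x y) z = polar n x (mul y z))
    (hdim : 4 ≤ Module.finrank k S)
    (e : S)
    (hpara : ∀ x : S, mul e x = polar n e x • e - x ∧ mul x e = polar n e x • e - x)
    {G : Type*} [Group G] [DecidableEq G]
    (A : G → Submodule k S)
    (hdecomp : DirectSum.IsInternal A)
    (hgrmul : ∀ g h : G, ∀ x ∈ A g, ∀ y ∈ A h, mul x y ∈ A (g * h)) :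
    e ∈ A 1 := by
  let := hdecomp.chooseDecomposition
  have hS : IsSymmetricComposition mul n := ⟨hnondeg, hcomp, hassoc⟩
  by_contra he1
  obtain ⟨g, hg1, hge⟩ : ∃ g ≠ 1, gradedProj A g e ≠ 0 := by
    by_contra! h
    exact he1 (mem_of_gradedProj_eq_zero h)
  obtain ⟨u, hu, hfu⟩ := exists_mem_inv_polar_paraUnit_eq_one hS hpara hgrmul hg1 hge
  have hfg := polar_paraUnit_gradedProj_ne_zero hS hpara hgrmul hg1 hge hu hfu
  obtain ⟨b, hb, y, hy, hy0⟩ := exists_mem_ne_zero_of_card_lt_finrank (A := A) (polarBilin n e)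
    (fun c z hz hfz => eq_zero_of_polar_paraUnit_eq_zero hS hpara hgrmul hg1 hu hfu hfg hz hfz)
    {1, g, g⁻¹} (Finset.card_le_three.trans_lt hdim)
  simp only [Finset.mem_insert, Finset.mem_singleton, not_or] at hb
  obtain ⟨hb1, hbg, hbg'⟩ := hb
  have hgb : g * b ≠ 1 := fun h => hbg' (eq_inv_of_mul_eq_one_right h)
  have heb : gradedProj A b e ≠ 0 := fun h0 => hy0 (by
    rw [eq_two_mul_polar_paraUnit_smul hS hpara hgrmul hg1 hu hfu hbg hgb hy, h0, smul_zero])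
  obtain ⟨v, hv, hfv⟩ := exists_mem_inv_polar_paraUnit_eq_one hS hpara hgrmul hb1 heb
  have hv2 := eq_two_mul_polar_paraUnit_smul hS hpara hgrmul hg1 hu hfu
    (fun h => hbg' (by rw [← h, inv_inv])) (fun h => hbg (mul_inv_eq_one.mp h).symm) hv
  rw [hfv, mul_one] at hv2
  obtain ⟨hpb, hfb⟩ := two_mul_polar_gradedProj_paraUnit hS hpara hgrmul hb1 hv hfv hv2
  exact hge (gradedProj_paraUnit_eq_zero_of_two_mul_polar hS hpara hgrmul hg1 hgb hpb hfb)
end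

section
/- Let (S,*,n) be a two-dimensional symmetric composition algebra over a field k containing an element x with n(x) = 0 and α := n(x, x*x) ≠ 0 (so that {x, x*x} is a basis of S). Then S contains a nonzero idempotent (an element e ≠ 0 with e*e = e) if and only if there exists ε ∈ k with ε³ = α. -/
/-!
In a symmetric composition algebra `(x * y) * x = n(x) y = x * (y * x)`. For `x` with
`n(x) = 0` and `y = x * x` this gives `x * y = y * x = 0`, and its linearization gives
`y * y = α x` with `α = n(x, y)`. As `x, y` are isotropic with `n(x, y) ≠ 0` they form a basis,
and `(s x + t y) * (s x + t y) = t² α x + s² y`. A nonzero idempotent is thus a nonzero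
solution of `s = t² α`, `t = s²`: then `t³ α² = 1` and `ε = t α` is a cube root of `α`;
conversely a cube root `ε` gives the idempotent `ε⁻¹ x + ε⁻² y`.
-/

open QuadraticMap

section Composition

variable {R S : Type*} [CommRing R] [AddCommGroup S] [Module R S]
  {mul : S →ₗ[R] S →ₗ[R] S} {n : QuadraticForm R S}

theorem polar_mul_mul_left_s4 (hcomp : ∀ x y : S, n (mul x y) = n x * n y) (u v w : S) :
    polar n (mul u v) (mul u w) = n u * polar n v w := by
  simp only [polar, ← map_add, hcomp]
  ring

theorem polar_mul_mul_right (hcomp : ∀ x y : S, n (mul x y) = n x * n y) (u v w : S) :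
    polar n (mul u w) (mul v w) = polar n u v * n w := by
  simp only [polar, ← LinearMap.add_apply, ← map_add, hcomp]
  ring

end Composition

structure IsSymmetricComposition_s4 {R S : Type*} [CommRing R] [AddCommGroup S] [Module R S]
    (mul : S →ₗ[R] S →ₗ[R] S) (n : QuadraticForm R S) : Prop where
  polar_nondegenerate : ∀ x : S, (∀ y : S, polar n x y = 0) → x = 0
  map_mul : ∀ x y : S, n (mul x y) = n x * n y
  polar_mul_left : ∀ x y z : S, polar n (mul x y) z = polar n x (mul y z)

namespace IsSymmetricComposition_s4

variable {R S : Type*} [CommRing R] [AddCommGroup S] [Module R S]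
  {mul : S →ₗ[R] S →ₗ[R] S} {n : QuadraticForm R S}

theorem mul_mul_self_left (h : IsSymmetricComposition_s4 mul n) (u v : S) :
    mul (mul u v) u = n u • v := by
  refine sub_eq_zero.1 (h.polar_nondegenerate _ fun z => ?_)
  rw [polar_sub_left, h.polar_mul_left, polar_mul_mul_left_s4 h.map_mul, polar_smul_left,
    smul_eq_mul, sub_self]

theorem mul_mul_self_right (h : IsSymmetricComposition_s4 mul n) (u v : S) :
    mul u (mul v u) = n u • v := by
  refine sub_eq_zero.1 (h.polar_nondegenerate _ fun z => ?_)
  rw [polar_sub_left, polar_comm, ← h.polar_mul_left, polar_mul_mul_right h.map_mul,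
    polar_smul_left, smul_eq_mul, polar_comm n v, sub_eq_zero, mul_comm]

theorem mul_mul_add_mul_mul_s4 (h : IsSymmetricComposition_s4 mul n) (u v w : S) :
    mul u (mul v w) + mul w (mul v u) = polar n u w • v := by
  have hsum := h.mul_mul_self_right (u + w) v
  simp only [map_add, LinearMap.add_apply, h.mul_mul_self_right, polar] at hsum ⊢
  rw [sub_smul, sub_smul, ← hsum]
  abel

variable {x : S}

theorem mul_mul_self_eq_zero (h : IsSymmetricComposition_s4 mul n) (hx : n x = 0) :
    mul x (mul x x) = 0 := by
  rw [h.mul_mul_self_right, hx, zero_smul]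

theorem mul_self_mul_eq_zero (h : IsSymmetricComposition_s4 mul n) (hx : n x = 0) :
    mul (mul x x) x = 0 := by
  rw [h.mul_mul_self_left, hx, zero_smul]

theorem mul_self_mul_mul_self (h : IsSymmetricComposition_s4 mul n) (hx : n x = 0) :
    mul (mul x x) (mul x x) = polar n x (mul x x) • x := by
  rw [← h.mul_mul_add_mul_mul_s4, h.mul_mul_self_eq_zero hx, map_zero, zero_add]

theorem mul_self_smul_add_smul_mul_self (h : IsSymmetricComposition_s4 mul n) (hx : n x = 0)
    (s t : R) :
    mul (s • x + t • mul x x) (s • x + t • mul x x)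
      = (t ^ 2 * polar n x (mul x x)) • x + s ^ 2 • mul x x := by
  simp only [map_add, map_smul, LinearMap.add_apply, LinearMap.smul_apply,
    h.mul_mul_self_eq_zero hx, h.mul_self_mul_eq_zero hx, h.mul_self_mul_mul_self hx]
  module

end IsSymmetricComposition_s4

theorem linearIndependent_pair_of_isotropic {k S : Type*} [Field k] [AddCommGroup S]
    [Module k S] {n : QuadraticForm k S} {x y : S} (hx : n x = 0) (hy : n y = 0)
    (hxy : polar n x y ≠ 0) : LinearIndependent k ![x, y] := by
  refine LinearIndependent.pair_iff.2 fun s t h => ?_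
  have hpx : polar n (s • x + t • y) x = 0 := by rw [h, polar_zero_left]
  have hpy : polar n (s • x + t • y) y = 0 := by rw [h, polar_zero_left]
  simp only [polar_add_left, polar_smul_left, polar_self, hx, hy, smul_zero, smul_eq_mul,
    mul_zero, zero_add, add_zero, polar_comm n y x] at hpx hpy
  exact ⟨(mul_eq_zero.1 hpy).resolve_right hxy, (mul_eq_zero.1 hpx).resolve_right hxy⟩

theorem LinearIndependent.exists_smul_add_smul_eq_of_finrank_eq_two {k V : Type*} [Field k]
    [AddCommGroup V] [Module k V] {x y : V} (h : LinearIndependent k ![x, y])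
    (hV : Module.finrank k V = 2) (v : V) : ∃ s t : k, s • x + t • y = v :=
  Submodule.mem_span_pair.1 <| by
    rw [← Matrix.range_cons_cons_empty x y ![],
      h.span_eq_top_of_card_eq_finrank (by simp [hV])]
    trivial

theorem LinearIndependent.smul_add_smul_eq_iff {R M : Type*} [Ring R] [AddCommGroup M]
    [Module R M] {x y : M} (h : LinearIndependent R ![x, y]) {a b c d : R} :
    a • x + b • y = c • x + d • y ↔ a = c ∧ b = d := by
  refine ⟨fun heq => ?_, fun ⟨hac, hbd⟩ => hac ▸ hbd ▸ rfl⟩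
  simpa only [sub_eq_zero] using LinearIndependent.pair_iff.1 h (a - c) (b - d)
    (by rw [sub_smul, sub_smul, sub_add_sub_comm, heq, sub_self])

theorem exists_sq_mul_eq_and_sq_eq_iff_exists_pow_three_eq {k : Type*} [Field k] {α : k}
    (hα : α ≠ 0) :
    (∃ s t : k, (s ≠ 0 ∨ t ≠ 0) ∧ t ^ 2 * α = s ∧ s ^ 2 = t) ↔ ∃ ε : k, ε ^ 3 = α := by
  constructor
  · rintro ⟨s, t, hne, rfl, hst⟩
    have ht : t ≠ 0 := by rintro rfl; simp at hne
    have h : t ^ 3 * α ^ 2 = 1 := mul_left_cancel₀ ht (by linear_combination hst)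
    exact ⟨t * α, by linear_combination α * h⟩
  · rintro ⟨ε, rfl⟩
    have hε : ε ≠ 0 := by rintro rfl; simp at hα
    exact ⟨ε⁻¹, ε⁻¹ ^ 2, Or.inl (inv_ne_zero hε), by field_simp, rfl⟩

/-- a two-dimensional symmetric composition algebra containing an
element `x` with `n(x) = 0` and `α := n(x, x*x) ≠ 0` has a nonzero idempotent
if and only if `α` is a cube in `k`. -/
theorem two_dim_symmetric_composition_idempotent_iff_cube
    {k : Type*} [Field k] {S : Type*} [AddCommGroup S] [Module k S]
    (mul : S →ₗ[k] S →ₗ[k] S) (n : QuadraticForm k S)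
    (hnondeg : ∀ x : S, (∀ y : S, polar n x y = 0) → x = 0)
    (hcomp : ∀ x y : S, n (mul x y) = n x * n y)
    (hassoc : ∀ x y z : S, polar n (mul x y) z = polar n x (mul y z))
    (hdim : Module.finrank k S = 2)
    (x : S) (hx : n x = 0) (hα : polar n x (mul x x) ≠ 0) :
    (∃ e : S, e ≠ 0 ∧ mul e e = e) ↔ ∃ ε : k, ε ^ 3 = polar n x (mul x x) := by
  have hS : IsSymmetricComposition_s4 mul n := ⟨hnondeg, hcomp, hassoc⟩
  have hli : LinearIndependent k ![x, mul x x] :=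
    linearIndependent_pair_of_isotropic hx (by rw [hcomp, hx, zero_mul]) hα
  rw [← exists_sq_mul_eq_and_sq_eq_iff_exists_pow_three_eq hα]
  constructor
  · rintro ⟨e, he, hee⟩
    obtain ⟨s, t, rfl⟩ := hli.exists_smul_add_smul_eq_of_finrank_eq_two hdim e
    rw [hS.mul_self_smul_add_smul_mul_self hx, hli.smul_add_smul_eq_iff] at hee
    exact ⟨s, t, by contrapose! he; simp [he.1, he.2], hee⟩
  · rintro ⟨s, t, hne, hs, ht⟩
    refine ⟨s • x + t • mul x x, fun h0 => ?_, ?_⟩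
    · obtain ⟨rfl, rfl⟩ := LinearIndependent.pair_iff.1 hli s t h0
      simp at hne
    · rw [hS.mul_self_smul_add_smul_mul_self hx, hs, ht]
end

section
/- Let (S,*,n) and (S',⋆,n') be Okubo algebras over a field k. Suppose x, y ∈ S satisfy n(x) = n(y) = 0, n(x, x*x) ≠ 0, n(y, y*y) ≠ 0, n(a, b) = 0 for all a ∈ {x, x*x}, b ∈ {y, y*y}, and x*y = 0; suppose x', y' ∈ S' satisfy the analogous conditions with respect to ⋆ and n', including x'⋆y' = 0. If n(x, x*x) = n'(x', x'⋆x') and n(y, y*y) = n'(y', y'⋆y'), then there exists a k-linear bijection φ : S → S' with φ(a*b) = φ(a) ⋆ φ(b) and n'(φ(a)) = n(a) for all a, b ∈ S, and with φ(x) = x' and φ(y) = y'. -/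
/-!
Put `v = (x, x*x, y, y*y, y*x, (x*x)*y, x*(y*y), (y*x)*(y*x))`. The flexible identities
`(a*b)*a = n(a) b = a*(b*a)` and their linearizations give the products of `x` and `y` with the
members of `v`, and, via the invariance `n(a*b, c) = n(a, b*c)`, the Gram matrix of `v`; both
depend only on `α = n(x, x*x)` and `β = n(y, y*y)`. The Gram matrix is hyperbolic with
nonzero entries `±α, ±β, ±αβ`, so `v` is a basis, and the linear map `φ` sending `v` to the
corresponding basis of `S'` is compatible with norm and multiplication at `x` and `y`. By the
same linearized identities the elements at which `φ` is compatible form a subalgebra; it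
contains `x` and `y`, which generate `S`.
-/

open QuadraticMap

section

variable {k S : Type*} [Field k] [AddCommGroup S] [Module k S]

theorem linearIndependent_of_pairing_eq_ite {M ι : Type*} [AddCommGroup M] [Module k M]
    [Fintype ι] [DecidableEq ι] (B : M →ₗ[k] M →ₗ[k] k) {v : ι → M} {σ : ι → ι}
    (hσ : σ.Injective) {c : ι → k} (hc : ∀ i, c i ≠ 0)
    (hB : ∀ i j, B (v i) (v j) = if j = σ i then c i else 0) : LinearIndependent k v := by
  rw [Fintype.linearIndependent_iff]
  intro g hg i
  simpa [LinearMap.sum_apply, hB, hσ.eq_iff, hc] using congrArg (fun z => B z (v (σ i))) hg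

structure IsSymmetricComposition_s7 (mul : S →ₗ[k] S →ₗ[k] S) (n : QuadraticForm k S) : Prop where
  polar_nondegenerate : ∀ a : S, (∀ b, polar n a b = 0) → a = 0
  map_mul : ∀ a b, n (mul a b) = n a * n b
  polar_mul_assoc : ∀ a b c, polar n (mul a b) c = polar n a (mul b c)

namespace IsSymmetricComposition_s7

variable {mul : S →ₗ[k] S →ₗ[k] S} {n : QuadraticForm k S} (h : IsSymmetricComposition_s7 mul n)
include h

theorem polar_mul_rotate (a b c : S) : polar n (mul a b) c = polar n b (mul c a) := by
  rw [polar_comm, ← h.polar_mul_assoc, polar_comm]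

theorem polar_mul_mul_left (a b c : S) :
    polar n (mul a b) (mul a c) = n a * polar n b c := by
  simp only [polar, ← map_add, h.map_mul]
  ring

theorem polar_mul_mul_right_s7 (a b c : S) :
    polar n (mul a c) (mul b c) = polar n a b * n c := by
  simp only [polar, ← LinearMap.add_apply, ← map_add, h.map_mul]
  ring

theorem mul_mul_self_eq (a b : S) : mul (mul a b) a = n a • b := by
  refine sub_eq_zero.mp (h.polar_nondegenerate _ fun c => ?_)
  rw [polar_sub_left, h.polar_mul_assoc, h.polar_mul_mul_left, polar_smul_left, smul_eq_mul,
    sub_self]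

theorem self_mul_mul_eq (a b : S) : mul a (mul b a) = n a • b := by
  refine sub_eq_zero.mp (h.polar_nondegenerate _ fun c => ?_)
  rw [polar_sub_left, h.polar_mul_rotate, h.polar_mul_mul_right_s7, polar_smul_left, smul_eq_mul,
    polar_comm, mul_comm, sub_self]

theorem mul_mul_add_mul_mul_s7 (a b c : S) :
    mul (mul a b) c + mul (mul c b) a = polar n a c • b := by
  have key := h.mul_mul_self_eq (a + c) b
  simp only [map_add, LinearMap.add_apply, h.mul_mul_self_eq] at key
  rw [polar]
  linear_combination (norm := module) key

theorem mul_mul_add_mul_mul' (a b c : S) :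
    mul a (mul b c) + mul c (mul b a) = polar n a c • b := by
  have key := h.self_mul_mul_eq (a + c) b
  simp only [map_add, LinearMap.add_apply, h.self_mul_mul_eq] at key
  rw [polar]
  linear_combination (norm := module) key

end IsSymmetricComposition_s7

section Transfer

variable {S' : Type*} [AddCommGroup S'] [Module k S']
  (mul : S →ₗ[k] S →ₗ[k] S) (n : QuadraticForm k S)
  (mul' : S' →ₗ[k] S' →ₗ[k] S') (n' : QuadraticForm k S') (φ : S →ₗ[k] S')

structure IsCompatibleAt (a : S) : Prop where
  map_norm : n' (φ a) = n a
  map_polar : ∀ b, polar n' (φ a) (φ b) = polar n a b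
  map_mul_left : ∀ b, φ (mul a b) = mul' (φ a) (φ b)
  map_mul_right : ∀ b, φ (mul b a) = mul' (φ b) (φ a)

def compatibleSubmodule : Submodule k S where
  carrier := {a | IsCompatibleAt mul n mul' n' φ a}
  zero_mem' := ⟨by simp, by simp, by simp, by simp⟩
  add_mem' {a c} ha hc := by
    refine ⟨?_, fun b => ?_, fun b => ?_, fun b => ?_⟩
    · have h := ha.map_polar c
      simp only [polar] at h
      rw [map_add]
      linear_combination h + ha.map_norm + hc.map_norm
    · rw [map_add, polar_add_left, polar_add_left, ha.map_polar, hc.map_polar]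
    · simp only [map_add, LinearMap.add_apply, ha.map_mul_left, hc.map_mul_left]
    · simp only [map_add, ha.map_mul_right, hc.map_mul_right]
  smul_mem' t {a} ha := by
    refine ⟨?_, fun b => ?_, fun b => ?_, fun b => ?_⟩
    · rw [map_smul, QuadraticMap.map_smul, QuadraticMap.map_smul, ha.map_norm]
    · rw [map_smul, polar_smul_left, polar_smul_left, ha.map_polar]
    · simp only [map_smul, LinearMap.smul_apply, ha.map_mul_left]
    · simp only [map_smul, ha.map_mul_right]

variable {mul n mul' n' φ}

theorem isCompatibleAt_mul (hS : IsSymmetricComposition_s7 mul n)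
    (hS' : IsSymmetricComposition_s7 mul' n') {u w : S} (hu : IsCompatibleAt mul n mul' n' φ u)
    (hw : IsCompatibleAt mul n mul' n' φ w) : IsCompatibleAt mul n mul' n' φ (mul u w) := by
  refine ⟨?_, fun b => ?_, fun b => ?_, fun b => ?_⟩
  · rw [hu.map_mul_left, hS'.map_mul, hS.map_mul, hu.map_norm, hw.map_norm]
  · rw [hu.map_mul_left, hS'.polar_mul_assoc, ← hw.map_mul_left, hu.map_polar,
      hS.polar_mul_assoc]
  · rw [eq_sub_of_add_eq (hS.mul_mul_add_mul_mul_s7 u w b), map_sub, map_smul, hu.map_mul_right,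
      hw.map_mul_right, ← hu.map_polar, hu.map_mul_left, ← hS'.mul_mul_add_mul_mul_s7,
      add_sub_cancel_right]
  · rw [eq_sub_of_add_eq (hS.mul_mul_add_mul_mul' b u w), map_sub, map_smul, hw.map_mul_left,
      hu.map_mul_left, polar_comm, ← hw.map_polar, polar_comm, hu.map_mul_left,
      ← hS'.mul_mul_add_mul_mul', add_sub_cancel_right]

theorem isCompatibleAt_of_generates (hS : IsSymmetricComposition_s7 mul n)
    (hS' : IsSymmetricComposition_s7 mul' n') {G : Set S}
    (hG : ∀ g ∈ G, IsCompatibleAt mul n mul' n' φ g)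
    (hgen : ∀ p : Submodule k S, G ⊆ p → (∀ a ∈ p, ∀ b ∈ p, mul a b ∈ p) → p = ⊤) (a : S) :
    IsCompatibleAt mul n mul' n' φ a := by
  have htop := hgen (compatibleSubmodule mul n mul' n' φ) hG
    fun u hu w hw => isCompatibleAt_mul hS hS' hu hw
  change a ∈ compatibleSubmodule mul n mul' n' φ
  rw [htop]
  exact Submodule.mem_top

theorem isCompatibleAt_of_basis {ι : Type*} (e : Module.Basis ι k S) {g : S}
    (hn : n' (φ g) = n g) (hpolar : ∀ i, polar n' (φ g) (φ (e i)) = polar n g (e i))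
    (hl : ∀ i, φ (mul g (e i)) = mul' (φ g) (φ (e i)))
    (hr : ∀ i, φ (mul (e i) g) = mul' (φ (e i)) (φ g)) : IsCompatibleAt mul n mul' n' φ g := by
  refine ⟨hn, fun b => ?_, fun b => ?_, fun b => ?_⟩
  · exact LinearMap.congr_fun (e.ext (f₁ := (polarBilin n' (φ g)) ∘ₗ φ) (f₂ := polarBilin n g)
      hpolar) b
  · exact LinearMap.congr_fun (e.ext (f₁ := φ ∘ₗ mul g) (f₂ := mul' (φ g) ∘ₗ φ) hl) b
  · exact LinearMap.congr_fun (e.ext (f₁ := φ ∘ₗ mul.flip g) (f₂ := mul'.flip (φ g) ∘ₗ φ) hr) b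

end Transfer

section StandardPair

variable (mul : S →ₗ[k] S →ₗ[k] S) (n : QuadraticForm k S)

structure IsStandardPair (x y : S) (α β : k) : Prop where
  norm_x : n x = 0
  norm_y : n y = 0
  polar_x : polar n x (mul x x) = α
  polar_y : polar n y (mul y y) = β
  α_ne_zero : α ≠ 0
  β_ne_zero : β ≠ 0
  orthogonal : ∀ a ∈ ({x, mul x x} : Set S), ∀ b ∈ ({y, mul y y} : Set S), polar n a b = 0
  mul_x_y : mul x y = 0

def standardFamily (x y : S) : Fin 8 → S :=
  ![x, mul x x, y, mul y y, mul y x, mul (mul x x) y, mul x (mul y y), mul (mul y x) (mul y x)]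

namespace IsStandardPair

variable {mul n} {x y : S} {α β : k} (hS : IsSymmetricComposition_s7 mul n)
  (hp : IsStandardPair mul n x y α β)

section

include hp

theorem polar_x_y : polar n x y = 0 := hp.orthogonal x (by simp) y (by simp)
theorem polar_x_yy : polar n x (mul y y) = 0 := hp.orthogonal x (by simp) (mul y y) (by simp)
theorem polar_xx_y : polar n (mul x x) y = 0 := hp.orthogonal (mul x x) (by simp) y (by simp)
theorem polar_xx_yy : polar n (mul x x) (mul y y) = 0 :=
  hp.orthogonal (mul x x) (by simp) (mul y y) (by simp)

end

include hS hp

-- Products are named by their factors: `yx_x` is `(y*x)*x` and `x_yx` is `x*(y*x)`.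
theorem x_xx : mul x (mul x x) = 0 := by rw [hS.self_mul_mul_eq, hp.norm_x, zero_smul]
theorem xx_x : mul (mul x x) x = 0 := by rw [hS.mul_mul_self_eq, hp.norm_x, zero_smul]
theorem y_yy : mul y (mul y y) = 0 := by rw [hS.self_mul_mul_eq, hp.norm_y, zero_smul]
theorem yy_y : mul (mul y y) y = 0 := by rw [hS.mul_mul_self_eq, hp.norm_y, zero_smul]
theorem x_yx : mul x (mul y x) = 0 := by rw [hS.self_mul_mul_eq, hp.norm_x, zero_smul]
theorem yx_y : mul (mul y x) y = 0 := by rw [hS.mul_mul_self_eq, hp.norm_y, zero_smul]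
theorem y_xxy : mul y (mul (mul x x) y) = 0 := by rw [hS.self_mul_mul_eq, hp.norm_y, zero_smul]
theorem xyy_x : mul (mul x (mul y y)) x = 0 := by rw [hS.mul_mul_self_eq, hp.norm_x, zero_smul]

theorem polar_x_yx : polar n x (mul y x) = 0 := by
  rw [← hS.polar_mul_assoc, hp.mul_x_y, polar_zero_left]

theorem polar_y_yx : polar n y (mul y x) = 0 := by
  rw [← hS.polar_mul_assoc, polar_comm, hp.polar_x_yy]

theorem yx_x : mul (mul y x) x = -mul (mul x x) y := by
  have := hS.mul_mul_add_mul_mul_s7 x x y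
  rw [hp.polar_x_y, zero_smul] at this
  exact eq_neg_of_add_eq_zero_right this

theorem y_yx : mul y (mul y x) = -mul x (mul y y) := by
  have := hS.mul_mul_add_mul_mul' y y x
  rw [polar_comm, hp.polar_x_y, zero_smul] at this
  exact eq_neg_of_add_eq_zero_left this

theorem y_xx : mul y (mul x x) = 0 := by
  have := hS.mul_mul_add_mul_mul' y x x
  rwa [hp.mul_x_y, map_zero, add_zero, polar_comm, hp.polar_x_y, zero_smul] at this

theorem yy_x : mul (mul y y) x = 0 := by
  have := hS.mul_mul_add_mul_mul_s7 y y x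
  rwa [hp.mul_x_y, map_zero, LinearMap.zero_apply, add_zero, polar_comm, hp.polar_x_y,
    zero_smul] at this

theorem xx_yx : mul (mul x x) (mul y x) = α • y := by
  have := hS.mul_mul_add_mul_mul' (mul x x) y x
  rwa [hp.y_xx hS, map_zero, add_zero, polar_comm, hp.polar_x] at this

theorem yx_yy : mul (mul y x) (mul y y) = β • x := by
  have := hS.mul_mul_add_mul_mul_s7 y x (mul y y)
  rwa [hp.yy_x hS, map_zero, LinearMap.zero_apply, add_zero, hp.polar_y] at this

theorem y_xyy : mul y (mul x (mul y y)) = β • x := by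
  have := hS.mul_mul_add_mul_mul' y x (mul y y)
  rwa [hp.mul_x_y, map_zero, add_zero, hp.polar_y] at this

theorem xyy_y : mul (mul x (mul y y)) y = 0 := by
  have := hS.mul_mul_add_mul_mul_s7 x (mul y y) y
  rwa [hp.y_yy hS, map_zero, LinearMap.zero_apply, add_zero, hp.polar_x_y, zero_smul] at this

theorem xxy_y : mul (mul (mul x x) y) y = mul (mul y x) (mul y x) := by
  have := hS.mul_mul_add_mul_mul_s7 y x (mul y x)
  rw [hp.yx_x hS, map_neg, LinearMap.neg_apply, hp.polar_y_yx hS, zero_smul] at this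
  linear_combination (norm := module) -this

theorem yy_xx : mul (mul y y) (mul x x) = -mul (mul y x) (mul y x) := by
  have := hS.mul_mul_add_mul_mul_s7 (mul x x) y y
  rw [hp.xxy_y hS, hp.polar_xx_y, zero_smul] at this
  exact eq_neg_of_add_eq_zero_right this

theorem x_xxy : mul x (mul (mul x x) y) = 0 := by
  have := hS.mul_mul_add_mul_mul' x (mul x x) y
  rwa [hp.xx_x hS, map_zero, add_zero, hp.polar_x_y, zero_smul] at this

theorem x_xyy : mul x (mul x (mul y y)) = mul (mul y x) (mul y x) := by
  have := hS.mul_mul_add_mul_mul' x x (mul y y)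
  rw [hp.yy_xx hS, hp.polar_x_yy, zero_smul] at this
  linear_combination (norm := module) this

theorem yx_xxy : mul (mul y x) (mul (mul x x) y) = -(α • mul y y) := by
  have := hS.mul_mul_add_mul_mul' (mul y x) (mul x x) y
  rw [hp.xx_yx hS, polar_comm, hp.polar_y_yx hS, zero_smul, map_smul] at this
  exact eq_neg_of_add_eq_zero_left this

theorem x_yxyx : mul x (mul (mul y x) (mul y x)) = -(α • mul y y) := by
  have := hS.mul_mul_add_mul_mul' x (mul y x) (mul y x)
  rw [hp.yx_x hS, map_neg, hp.yx_xxy hS, hp.polar_x_yx hS, zero_smul] at this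
  linear_combination (norm := module) this

theorem y_yxyx : mul y (mul (mul y x) (mul y x)) = 0 := by
  have := hS.mul_mul_add_mul_mul' y (mul y x) (mul y x)
  rwa [hp.yx_y hS, map_zero, add_zero, hp.polar_y_yx hS, zero_smul] at this

theorem xxy_x : mul (mul (mul x x) y) x = α • y := by
  have := hS.mul_mul_add_mul_mul_s7 (mul x x) y x
  rwa [hp.mul_x_y, map_zero, LinearMap.zero_apply, add_zero, polar_comm, hp.polar_x] at this

theorem xyy_yx : mul (mul x (mul y y)) (mul y x) = -(β • mul x x) := by
  have := hS.mul_mul_add_mul_mul_s7 x (mul y y) (mul y x)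
  rw [hp.yx_yy hS, hp.polar_x_yx hS, zero_smul, map_smul, LinearMap.smul_apply] at this
  exact eq_neg_of_add_eq_zero_left this

theorem yxyx_y : mul (mul (mul y x) (mul y x)) y = -(β • mul x x) := by
  have := hS.mul_mul_add_mul_mul_s7 (mul y x) (mul y x) y
  rw [hp.y_yx hS, map_neg, LinearMap.neg_apply, hp.xyy_yx hS, polar_comm,
    hp.polar_y_yx hS, zero_smul] at this
  linear_combination (norm := module) this

theorem yxyx_x : mul (mul (mul y x) (mul y x)) x = 0 := by
  have := hS.mul_mul_add_mul_mul_s7 (mul y x) (mul y x) x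
  rwa [hp.x_yx hS, map_zero, LinearMap.zero_apply, add_zero, polar_comm, hp.polar_x_yx hS,
    zero_smul] at this

theorem polar_x_xxy : polar n x (mul (mul x x) y) = 0 := by
  rw [← hS.polar_mul_assoc, hp.x_xx hS, polar_zero_left]

theorem polar_x_xyy : polar n x (mul x (mul y y)) = 0 := by
  rw [← hS.polar_mul_assoc, hp.polar_xx_yy]

theorem polar_x_yxyx : polar n x (mul (mul y x) (mul y x)) = 0 := by
  rw [← hS.polar_mul_assoc, hp.x_yx hS, polar_zero_left]

theorem polar_y_xxy : polar n y (mul (mul x x) y) = 0 := by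
  rw [← hS.polar_mul_assoc, hp.y_xx hS, polar_zero_left]

theorem polar_y_xyy : polar n y (mul x (mul y y)) = 0 := by
  rw [polar_comm, hS.polar_mul_assoc, hp.yy_y hS, polar_zero_right]

theorem polar_y_yxyx : polar n y (mul (mul y x) (mul y x)) = 0 := by
  rw [polar_comm, hS.polar_mul_assoc, hp.yx_y hS, polar_zero_right]

theorem x_mul_standardFamily (j : Fin 8) :
    mul x (standardFamily mul x y j) = (![1, 0, 0, 1, 0, 0, 1, -α] : Fin 8 → k) j •
      standardFamily mul x y (![1, 0, 0, 6, 0, 0, 7, 3] j) := by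
  fin_cases j <;>
    simp [standardFamily, hp.mul_x_y, hp.x_xx hS, hp.x_yx hS, hp.x_xxy hS, hp.x_xyy hS,
      hp.x_yxyx hS]

theorem y_mul_standardFamily (j : Fin 8) :
    mul y (standardFamily mul x y j) = (![1, 0, 1, 0, -1, 0, β, 0] : Fin 8 → k) j •
      standardFamily mul x y (![4, 0, 3, 0, 6, 0, 0, 0] j) := by
  fin_cases j <;>
    simp [standardFamily, hp.y_xx hS, hp.y_yy hS, hp.y_yx hS, hp.y_xxy hS, hp.y_xyy hS,
      hp.y_yxyx hS]

theorem standardFamily_mul_x (j : Fin 8) :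
    mul (standardFamily mul x y j) x = (![1, 0, 1, 0, -1, α, 0, 0] : Fin 8 → k) j •
      standardFamily mul x y (![1, 0, 4, 0, 5, 2, 0, 0] j) := by
  fin_cases j <;>
    simp [standardFamily, hp.xx_x hS, hp.yy_x hS, hp.yx_x hS, hp.xxy_x hS, hp.xyy_x hS,
      hp.yxyx_x hS]

theorem standardFamily_mul_y (j : Fin 8) :
    mul (standardFamily mul x y j) y = (![0, 1, 1, 0, 0, 1, 0, -β] : Fin 8 → k) j •
      standardFamily mul x y (![0, 5, 3, 0, 0, 7, 0, 1] j) := by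
  fin_cases j <;>
    simp [standardFamily, hp.mul_x_y, hp.yy_y hS, hp.yx_y hS, hp.xxy_y hS, hp.xyy_y hS,
      hp.yxyx_y hS]

theorem polar_standardFamily (i j : Fin 8) :
    polar n (standardFamily mul x y i) (standardFamily mul x y j) =
      if j = (![1, 0, 3, 2, 7, 6, 5, 4] : Fin 8 → Fin 8) i then
        (![α, α, β, β, -(α * β), α * β, α * β, -(α * β)] : Fin 8 → k) i else 0 := by
  have row_x (j : Fin 8) : polar n x (standardFamily mul x y j) = if j = 1 then α else 0 := by
    fin_cases j <;>
      simp [standardFamily, hp.norm_x, hp.polar_x, hp.polar_x_y, hp.polar_x_yy,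
        hp.polar_x_yx hS, hp.polar_x_xxy hS, hp.polar_x_xyy hS, hp.polar_x_yxyx hS]
  have row_y (j : Fin 8) : polar n y (standardFamily mul x y j) = if j = 3 then β else 0 := by
    fin_cases j <;>
      simp [standardFamily, hp.norm_y, hp.polar_y, polar_comm _ y x, polar_comm _ y (mul x x),
        hp.polar_x_y, hp.polar_xx_y, hp.polar_y_yx hS, hp.polar_y_xxy hS, hp.polar_y_xyy hS,
        hp.polar_y_yxyx hS]
  have left_x := hp.x_mul_standardFamily hS
  have left_y := hp.y_mul_standardFamily hS
  have right_x := hp.standardFamily_mul_x hS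
  -- Invariance moves every `v i` in the first slot onto `x` or `y`, so the Gram matrix is read
  -- off from `row_x`, `row_y` and the multiplication tables.
  have polar_v1 (b : S) : polar n (standardFamily mul x y 1) b = polar n x (mul x b) :=
    hS.polar_mul_assoc _ _ _
  have polar_v3 (b : S) : polar n (standardFamily mul x y 3) b = polar n y (mul y b) :=
    hS.polar_mul_assoc _ _ _
  have polar_v4 (b : S) : polar n (standardFamily mul x y 4) b = polar n y (mul x b) :=
    hS.polar_mul_assoc _ _ _
  have polar_v5 (b : S) :
      polar n (standardFamily mul x y 5) b = polar n x (mul x (mul y b)) :=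
    (hS.polar_mul_assoc _ _ _).trans (hS.polar_mul_assoc _ _ _)
  have polar_v6 (b : S) :
      polar n (standardFamily mul x y 6) b = polar n y (mul y (mul b x)) :=
    (hS.polar_mul_rotate _ _ _).trans (hS.polar_mul_assoc _ _ _)
  have polar_v7 (b : S) :
      polar n (standardFamily mul x y 7) b = polar n y (mul y (mul (mul b x) x)) := by
    change polar n (mul (mul y x) (mul y x)) b = _
    rw [← hp.x_xyy hS, hS.polar_mul_rotate]
    exact polar_v6 _
  have hx : standardFamily mul x y 0 = x := rfl
  have hy : standardFamily mul x y 2 = y := rfl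
  -- With `v` opaque, `simp` rewrites with the tables instead of unfolding `v`.
  generalize standardFamily mul x y = v at *
  subst hx hy
  fin_cases i <;> fin_cases j <;>
    simp [polar_v1, polar_v3, polar_v4, polar_v5, polar_v6, polar_v7, left_x, left_y, right_x,
      row_x, row_y, mul_comm β α]

theorem linearIndependent_standardFamily : LinearIndependent k (standardFamily mul x y) := by
  refine linearIndependent_of_pairing_eq_ite (polarBilin n)
    (σ := ![1, 0, 3, 2, 7, 6, 5, 4]) (by decide)
    (c := ![α, α, β, β, -(α * β), α * β, α * β, -(α * β)]) (fun i => ?_)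
    (hp.polar_standardFamily hS)
  have := mul_ne_zero hp.α_ne_zero hp.β_ne_zero
  fin_cases i <;> simp [hp.α_ne_zero, hp.β_ne_zero, this]

noncomputable def basis (hdim : Module.finrank k S = 8) : Module.Basis (Fin 8) k S :=
  basisOfLinearIndependentOfCardEqFinrank (hp.linearIndependent_standardFamily hS)
    (by rw [hdim, Fintype.card_fin])

theorem coe_basis (hdim : Module.finrank k S = 8) :
    ⇑(hp.basis hS hdim) = standardFamily mul x y :=
  coe_basisOfLinearIndependentOfCardEqFinrank _ _

theorem eq_top_of_mul_mem (hdim : Module.finrank k S = 8) (p : Submodule k S) (hx : x ∈ p)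
    (hy : y ∈ p) (hmul : ∀ a ∈ p, ∀ b ∈ p, mul a b ∈ p) : p = ⊤ := by
  have hv (j : Fin 8) : standardFamily mul x y j ∈ p := by
    have hxx := hmul x hx x hx
    have hyx := hmul y hy x hx
    fin_cases j
    exacts [hx, hxx, hy, hmul y hy y hy, hyx, hmul _ hxx y hy, hmul x hx _ (hmul y hy y hy),
      hmul _ hyx _ hyx]
  rw [eq_top_iff, ← (hp.basis hS hdim).span_eq, Submodule.span_le, hp.coe_basis hS hdim]
  exact Set.range_subset_iff.mpr hv

variable {S' : Type*} [AddCommGroup S'] [Module k S'] {mul' : S' →ₗ[k] S' →ₗ[k] S'}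
  {n' : QuadraticForm k S'} {x' y' : S'}

theorem isCompatibleAt (hS' : IsSymmetricComposition_s7 mul' n')
    (hp' : IsStandardPair mul' n' x' y' α β) (hdim : Module.finrank k S = 8) {φ : S →ₗ[k] S'}
    (hφ : ∀ j, φ (standardFamily mul x y j) = standardFamily mul' x' y' j) (a : S) :
    IsCompatibleAt mul n mul' n' φ a := by
  have he := hp.coe_basis hS hdim
  have hx : φ x = x' := hφ 0
  have hy : φ y = y' := hφ 2
  refine isCompatibleAt_of_generates hS hS' (G := {x, y}) ?_
    (fun p hG hmul => hp.eq_top_of_mul_mem hS hdim p (hG (by simp)) (hG (by simp)) hmul) a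
  rintro g (rfl | rfl)
  · refine isCompatibleAt_of_basis (hp.basis hS hdim) ?_ (fun i => ?_) (fun i => ?_) (fun i => ?_)
    · rw [hx, hp.norm_x, hp'.norm_x]
    · rw [he, hx, hφ]
      exact (hp'.polar_standardFamily hS' 0 i).trans (hp.polar_standardFamily hS 0 i).symm
    · rw [he, hx, hφ, hp.x_mul_standardFamily hS, map_smul, hφ, hp'.x_mul_standardFamily hS']
    · rw [he, hx, hφ, hp.standardFamily_mul_x hS, map_smul, hφ, hp'.standardFamily_mul_x hS']
  · refine isCompatibleAt_of_basis (hp.basis hS hdim) ?_ (fun i => ?_) (fun i => ?_) (fun i => ?_)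
    · rw [hy, hp.norm_y, hp'.norm_y]
    · rw [he, hy, hφ]
      exact (hp'.polar_standardFamily hS' 2 i).trans (hp.polar_standardFamily hS 2 i).symm
    · rw [he, hy, hφ, hp.y_mul_standardFamily hS, map_smul, hφ, hp'.y_mul_standardFamily hS']
    · rw [he, hy, hφ, hp.standardFamily_mul_y hS, map_smul, hφ, hp'.standardFamily_mul_y hS']

end IsStandardPair

end StandardPair

end

theorem okubo_isomorphism_of_standard_pairs_general
    {k : Type*} [Field k]
    {S : Type*} [AddCommGroup S] [Module k S]
    {S' : Type*} [AddCommGroup S'] [Module k S']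
    (mul : S →ₗ[k] S →ₗ[k] S) (n : QuadraticForm k S)
    (mul' : S' →ₗ[k] S' →ₗ[k] S') (n' : QuadraticForm k S')
    (hnondeg : ∀ x : S, (∀ y : S, polar n x y = 0) → x = 0)
    (hcomp : ∀ x y : S, n (mul x y) = n x * n y)
    (hassoc : ∀ x y z : S, polar n (mul x y) z = polar n x (mul y z))
    (hdim : Module.finrank k S = 8)
    (hnondeg' : ∀ x : S', (∀ y : S', polar n' x y = 0) → x = 0)
    (hcomp' : ∀ x y : S', n' (mul' x y) = n' x * n' y)
    (hassoc' : ∀ x y z : S', polar n' (mul' x y) z = polar n' x (mul' y z))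
    (hdim' : Module.finrank k S' = 8)
    (x y : S) (hxn : n x = 0) (hyn : n y = 0)
    (hxa : polar n x (mul x x) ≠ 0) (hya : polar n y (mul y y) ≠ 0)
    (horth : ∀ a ∈ ({x, mul x x} : Set S), ∀ b ∈ ({y, mul y y} : Set S),
      polar n a b = 0)
    (hxy : mul x y = 0)
    (x' y' : S') (hxn' : n' x' = 0) (hyn' : n' y' = 0)
    (horth' : ∀ a ∈ ({x', mul' x' x'} : Set S'), ∀ b ∈ ({y', mul' y' y'} : Set S'),
      polar n' a b = 0)
    (hxy' : mul' x' y' = 0)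
    (hα : polar n x (mul x x) = polar n' x' (mul' x' x'))
    (hβ : polar n y (mul y y) = polar n' y' (mul' y' y')) :
    ∃ φ : S ≃ₗ[k] S',
      (∀ a b : S, φ (mul a b) = mul' (φ a) (φ b)) ∧
      (∀ a : S, n' (φ a) = n a) ∧
      φ x = x' ∧ φ y = y' := by
  have hS : IsSymmetricComposition_s7 mul n := ⟨hnondeg, hcomp, hassoc⟩
  have hS' : IsSymmetricComposition_s7 mul' n' := ⟨hnondeg', hcomp', hassoc'⟩
  have hp : IsStandardPair mul n x y (polar n x (mul x x)) (polar n y (mul y y)) :=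
    ⟨hxn, hyn, rfl, rfl, hxa, hya, horth, hxy⟩
  have hp' : IsStandardPair mul' n' x' y' (polar n x (mul x x)) (polar n y (mul y y)) :=
    ⟨hxn', hyn', hα.symm, hβ.symm, hxa, hya, horth', hxy'⟩
  let e := hp.basis hS hdim
  let e' := hp'.basis hS' hdim'
  let φ := e.equiv e' (Equiv.refl _)
  have hφ (j : Fin 8) : φ (standardFamily mul x y j) = standardFamily mul' x' y' j := by
    rw [← hp.coe_basis hS hdim, ← hp'.coe_basis hS' hdim']
    exact e.equiv_apply j e' (Equiv.refl _)
  have hc := hp.isCompatibleAt hS hS' hp' hdim hφ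
  exact ⟨φ, fun a => (hc a).map_mul_left, fun a => (hc a).map_norm, hφ 0, hφ 2⟩

/-- two Okubo algebras containing "standard pairs" `(x, y)` and
`(x', y')` with the same invariants `α = n(x, x*x) = n'(x', x'⋆x')` and
`β = n(y, y*y) = n'(y', y'⋆y')` are isomorphic via a norm-preserving
multiplicative linear bijection taking `x` to `x'` and `y` to `y'`. -/
theorem okubo_isomorphism_of_standard_pairs
    {k : Type*} [Field k]
    {S : Type*} [AddCommGroup S] [Module k S]
    {S' : Type*} [AddCommGroup S'] [Module k S']
    (mul : S →ₗ[k] S →ₗ[k] S) (n : QuadraticForm k S)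
    (mul' : S' →ₗ[k] S' →ₗ[k] S') (n' : QuadraticForm k S')
    (hnondeg : ∀ x : S, (∀ y : S, polar n x y = 0) → x = 0)
    (hcomp : ∀ x y : S, n (mul x y) = n x * n y)
    (hassoc : ∀ x y z : S, polar n (mul x y) z = polar n x (mul y z))
    (hdim : Module.finrank k S = 8)
    (hnopara : ¬ ∃ e : S, ∀ x : S,
      mul e x = polar n e x • e - x ∧ mul x e = polar n e x • e - x)
    (hnondeg' : ∀ x : S', (∀ y : S', polar n' x y = 0) → x = 0)
    (hcomp' : ∀ x y : S', n' (mul' x y) = n' x * n' y)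
    (hassoc' : ∀ x y z : S', polar n' (mul' x y) z = polar n' x (mul' y z))
    (hdim' : Module.finrank k S' = 8)
    (hnopara' : ¬ ∃ e : S', ∀ x : S',
      mul' e x = polar n' e x • e - x ∧ mul' x e = polar n' e x • e - x)
    (x y : S) (hxn : n x = 0) (hyn : n y = 0)
    (hxa : polar n x (mul x x) ≠ 0) (hya : polar n y (mul y y) ≠ 0)
    (horth : ∀ a ∈ ({x, mul x x} : Set S), ∀ b ∈ ({y, mul y y} : Set S),
      polar n a b = 0)
    (hxy : mul x y = 0)
    (x' y' : S') (hxn' : n' x' = 0) (hyn' : n' y' = 0)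
    (hxa' : polar n' x' (mul' x' x') ≠ 0) (hya' : polar n' y' (mul' y' y') ≠ 0)
    (horth' : ∀ a ∈ ({x', mul' x' x'} : Set S'), ∀ b ∈ ({y', mul' y' y'} : Set S'),
      polar n' a b = 0)
    (hxy' : mul' x' y' = 0)
    (hα : polar n x (mul x x) = polar n' x' (mul' x' x'))
    (hβ : polar n y (mul y y) = polar n' y' (mul' y' y')) :
    ∃ φ : S ≃ₗ[k] S',
      (∀ a b : S, φ (mul a b) = mul' (φ a) (φ b)) ∧
      (∀ a : S, n' (φ a) = n a) ∧
      φ x = x' ∧ φ y = y' :=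
  okubo_isomorphism_of_standard_pairs_general mul n mul' n' hnondeg hcomp hassoc hdim hnondeg'
    hcomp' hassoc' hdim' x y hxn hyn hxa hya horth hxy x' y' hxn' hyn' horth' hxy' hα hβ
end
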